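/- For J ≥ 0 and fields induced by summable positive sequences, the wall free energy τ̃_w is monotone: (i) if 0 ≤ J ≤ J′ then τ̃_w(J, h) ≤ τ̃_w(J′, h); (ii) if (h_ℓ) and (h′_ℓ) are summable positive sequences with h_ℓ ≤ h′_ℓ for every ℓ ≥ 1, then τ̃_w(J, h) ≤ τ̃_w(J, h′). -/

import Mathlib

open Finset Filter Real

/-- Sites of `ℤ^d`, written as `ℤ^(d-1) × ℤ`; the second coordinate is the
"vertical" (last) coordinate.  The semi-infinite lattice `H⁺` consists of the
sites whose last coordinate is `≥ 1`. -/
abbrev Site (d : ℕ) : Type := (Fin (d - 1) → ℤ) × ℤ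

/-- Nearest neighbours of a site (the `2d` sites at Euclidean distance 1). -/
def nbrs {d : ℕ} (i : Site d) : Finset (Site d) :=
  ({(i.1, i.2 + 1), (i.1, i.2 - 1)} : Finset (Site d)) ∪
    Finset.image
      (fun p : Fin (d - 1) × Bool =>
        (Function.update i.1 p.1 (i.1 p.1 + if p.2 then 1 else -1), i.2))
      Finset.univ

/-- The (±1)-valued configuration determined inside `Λ` by `τ` and equal to
the boundary condition `b` outside `Λ`. -/
noncomputable def conf {d : ℕ} (Λ : Finset (Site d)) (b : Site d → ℝ)
    (τ : {x // x ∈ Λ} → Bool) : Site d → ℝ :=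
  fun i => if h : i ∈ Λ then (if τ ⟨i, h⟩ then 1 else -1) else b i

/-- Minus the Hamiltonian of the semi-infinite Ising model in `Λ ⊆ H⁺` with
coupling `J` and external field `h`: `J·Σ σᵢσⱼ + Σ_{i∈Λ} hᵢσᵢ`, the first sum
over nearest-neighbour pairs `{i,j} ⊆ H⁺` with `{i,j} ∩ Λ ≠ ∅` (pairs inside
`Λ` are counted once via the factor 1/2). -/
noncomputable def energyH {d : ℕ} (J : ℝ) (h : Site d → ℝ) (Λ : Finset (Site d))
    (σ : Site d → ℝ) : ℝ :=
  J * ∑ i ∈ Λ, ∑ j ∈ (nbrs i).filter (fun j => 1 ≤ j.2),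
      (if j ∈ Λ then (1 : ℝ) / 2 else 1) * σ i * σ j
    + ∑ i ∈ Λ, h i * σ i

/-- Partition function of the semi-infinite Ising model. -/
noncomputable def ZH {d : ℕ} (J : ℝ) (h : Site d → ℝ) (Λ : Finset (Site d))
    (b : Site d → ℝ) : ℝ :=
  ∑ τ : {x // x ∈ Λ} → Bool, Real.exp (energyH J h Λ (conf Λ b τ))

/-- Gibbs expectation of the semi-infinite Ising model. -/
noncomputable def avgH {d : ℕ} (J : ℝ) (h : Site d → ℝ) (Λ : Finset (Site d))
    (b : Site d → ℝ) (f : (Site d → ℝ) → ℝ) : ℝ :=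
  (∑ τ : {x // x ∈ Λ} → Bool,
      f (conf Λ b τ) * Real.exp (energyH J h Λ (conf Λ b τ))) / ZH J h Λ b

/-- The box `Λₙ = [-n,n]^{d-1} × [1,n]`. -/
noncomputable def box (d : ℕ) (n : ℕ) : Finset (Site d) :=
  (Fintype.piFinset fun _ : Fin (d - 1) => Finset.Icc (-(n : ℤ)) (n : ℤ)) ×ˢ
    Finset.Icc (1 : ℤ) (n : ℤ)

/-- The reflected box `Λ'ₙ = [-n,n]^{d-1} × [-n+1,0]`. -/
noncomputable def box' (d : ℕ) (n : ℕ) : Finset (Site d) :=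
  (Fintype.piFinset fun _ : Fin (d - 1) => Finset.Icc (-(n : ℤ)) (n : ℤ)) ×ˢ
    Finset.Icc (-(n : ℤ) + 1) (0 : ℤ)

/-- `Δₙ = Λₙ ∪ Λ'ₙ`. -/
noncomputable def dbox (d : ℕ) (n : ℕ) : Finset (Site d) := box d n ∪ box' d n

/-- The wall `Wₙ = [-n,n]^{d-1} × {1}`. -/
noncomputable def wall (d : ℕ) (n : ℕ) : Finset (Site d) :=
  (Fintype.piFinset fun _ : Fin (d - 1) => Finset.Icc (-(n : ℤ)) (n : ℤ)) ×ˢ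
    ({(1 : ℤ)} : Finset ℤ)

/-- The decaying external field `(λ̂)ᵢ = λ / i_d^δ`. -/
noncomputable def lamHat (d : ℕ) (lam δ : ℝ) : Site d → ℝ :=
  fun i => lam / (i.2 : ℝ) ^ δ

/-- Plus boundary condition. -/
def plusBC (d : ℕ) : Site d → ℝ := fun _ => 1

/-- Minus boundary condition. -/
def minusBC (d : ℕ) : Site d → ℝ := fun _ => -1

/-- The finite-volume wall free energy `-|Wₙ|⁻¹ ln(Z⁻/Z⁺)`. -/
noncomputable def wallSeq (d : ℕ) (J : ℝ) (h : Site d → ℝ) (n : ℕ) : ℝ :=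
  -(((wall d n).card : ℝ))⁻¹ *
    Real.log (ZH J h (box d n) (minusBC d) / ZH J h (box d n) (plusBC d))

/-- Minus `β` times the Hamiltonian of the Ising model on `ℤ^d` in `Λ` with a
general nearest-neighbour coupling `Jc` and field `h`. -/
noncomputable def energyZ {d : ℕ} (β : ℝ) (Jc : Site d → Site d → ℝ) (h : Site d → ℝ)
    (Λ : Finset (Site d)) (σ : Site d → ℝ) : ℝ :=
  β * (∑ i ∈ Λ, ∑ j ∈ nbrs i,
      (if j ∈ Λ then (1 : ℝ) / 2 else 1) * Jc i j * σ i * σ j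
    + ∑ i ∈ Λ, h i * σ i)

/-- Partition function of the Ising model on `ℤ^d`. -/
noncomputable def ZZ {d : ℕ} (β : ℝ) (Jc : Site d → Site d → ℝ) (h : Site d → ℝ)
    (Λ : Finset (Site d)) (b : Site d → ℝ) : ℝ :=
  ∑ τ : {x // x ∈ Λ} → Bool, Real.exp (energyZ β Jc h Λ (conf Λ b τ))

/-- Gibbs expectation of the Ising model on `ℤ^d`. -/
noncomputable def avgZ {d : ℕ} (β : ℝ) (Jc : Site d → Site d → ℝ) (h : Site d → ℝ)
    (Λ : Finset (Site d)) (b : Site d → ℝ) (f : (Site d → ℝ) → ℝ) : ℝ :=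
  (∑ τ : {x // x ∈ Λ} → Bool,
      f (conf Λ b τ) * Real.exp (energyZ β Jc h Λ (conf Λ b τ))) / ZZ β Jc h Λ b

/-- The box `[-n,n]^d ⊆ ℤ^d`. -/
noncomputable def boxZ (d : ℕ) (n : ℕ) : Finset (Site d) :=
  (Fintype.piFinset fun _ : Fin (d - 1) => Finset.Icc (-(n : ℤ)) (n : ℤ)) ×ˢ
    Finset.Icc (-(n : ℤ)) (n : ℤ)

/-- Euclidean norm of a site. -/
noncomputable def enorm {d : ℕ} (i : Site d) : ℝ :=
  Real.sqrt ((∑ k, ((i.1 k : ℝ)) ^ 2) + ((i.2 : ℝ)) ^ 2)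


/-!
With `+` boundary condition every bond and field term of the semi-infinite Ising model is a
ferromagnetic multi-spin interaction `c_A σ^A` with `c_A ≥ 0`, and flipping all spins turns the
`-` boundary condition into the `+` one at the price of reversing the sign of the field terms.
Hence `ln Z⁺ - ln Z⁻` is `ln Z(c) - ln Z(s·c)` for a fixed sign pattern `s`. Along the segment from
`c` to `c'` its derivative is `⟨H_v⟩_c - ⟨H_{s·v}⟩_{s·c}` with `v = c' - c ≥ 0`, which is
nonnegative by Ginibre's inequality `|⟨σ^A⟩_{s·c}| ≤ ⟨σ^A⟩_c`. Ginibre's inequality in turn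
reduces, on the duplicated system `(σ, σρ)`, to the first Griffiths inequality.
-/

namespace WallFreeEnergy

section SpinSystem

variable {ι κ : Type*}

def spin (b : Bool) : ℝ := if b then 1 else -1

lemma spin_mul_self (b : Bool) : spin b * spin b = 1 := by cases b <;> norm_num [spin]

@[simp] lemma spin_true : spin true = 1 := rfl

@[simp] lemma spin_false : spin false = -1 := rfl

lemma abs_spin (b : Bool) : |spin b| = 1 := by cases b <;> norm_num [spin]

lemma spin_beq (a b : Bool) : spin (a == b) = spin a * spin b := by
  cases a <;> cases b <;> norm_num [spin]

lemma involutive_beq (σ : ι → Bool) : Function.Involutive fun τ : ι → Bool => fun i => σ i == τ i :=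
  fun τ => funext fun i => by
    change (σ i == (σ i == τ i)) = τ i
    cases σ i <;> cases τ i <;> rfl

variable [Fintype ι]

noncomputable def spinProd (e : ι → ℕ) (σ : ι → Bool) : ℝ := ∏ i, spin (σ i) ^ e i

lemma spinProd_mul_self (e : ι → ℕ) (σ : ι → Bool) : spinProd e σ * spinProd e σ = 1 := by
  simp only [spinProd, ← prod_mul_distrib, ← mul_pow, spin_mul_self, one_pow, prod_const_one]

lemma spinProd_eq_one_or (e : ι → ℕ) (σ : ι → Bool) : spinProd e σ = 1 ∨ spinProd e σ = -1 :=
  mul_self_eq_one_iff.mp (spinProd_mul_self e σ)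

lemma spinProd_add (e f : ι → ℕ) (σ : ι → Bool) :
    spinProd (e + f) σ = spinProd e σ * spinProd f σ := by
  simp only [spinProd, Pi.add_apply, pow_add, prod_mul_distrib]

lemma spinProd_sum (s : Finset κ) (e : κ → ι → ℕ) (σ : ι → Bool) :
    spinProd (∑ k ∈ s, e k) σ = ∏ k ∈ s, spinProd (e k) σ := by
  simp only [spinProd, Finset.sum_apply, ← prod_pow_eq_pow_sum]
  exact Finset.prod_comm

lemma spinProd_beq (e : ι → ℕ) (σ τ : ι → Bool) :
    spinProd e (fun i => σ i == τ i) = spinProd e σ * spinProd e τ := by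
  simp only [spinProd, spin_beq, mul_pow, prod_mul_distrib]

lemma one_add_spin_mul_spinProd_nonneg (b : Bool) (e : ι → ℕ) (σ : ι → Bool) :
    0 ≤ 1 + spin b * spinProd e σ := by
  rcases spinProd_eq_one_or e σ with h | h <;> cases b <;> norm_num [spin, h]

/-- Minus the Hamiltonian: the Gibbs weight of `σ` is `exp (energy K e c σ)`. -/
noncomputable def energy (K : Finset κ) (e : κ → ι → ℕ) (c : κ → ℝ) (σ : ι → Bool) : ℝ :=
  ∑ k ∈ K, c k * spinProd (e k) σ

lemma energy_line {K : Finset κ} (e : κ → ι → ℕ) (a v : κ → ℝ) (t : ℝ) (σ : ι → Bool) :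
    energy K e (fun k => a k + t * v k) σ = energy K e a σ + t * energy K e v σ := by
  simp only [energy, add_mul, sum_add_distrib, mul_sum, mul_assoc]

variable [DecidableEq ι]

lemma sum_spinProd_nonneg (e : ι → ℕ) : 0 ≤ ∑ σ : ι → Bool, spinProd e σ := by
  have hfactor : ∑ σ : ι → Bool, spinProd e σ = ∏ i, (1 + (-1 : ℝ) ^ e i) := by
    simp only [spinProd]
    rw [← Fintype.prod_sum (fun i (b : Bool) => spin b ^ e i)]
    norm_num [spin]
  rw [hfactor]
  refine prod_nonneg fun i _ => ?_
  rcases Nat.even_or_odd (e i) with he | ho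
  · rw [he.neg_one_pow]; norm_num
  · rw [ho.neg_one_pow]; norm_num

noncomputable def partitionFn (K : Finset κ) (e : κ → ι → ℕ) (c : κ → ℝ) : ℝ :=
  ∑ σ : ι → Bool, exp (energy K e c σ)

noncomputable def gibbsAvg (K : Finset κ) (e : κ → ι → ℕ) (c : κ → ℝ)
    (F : (ι → Bool) → ℝ) : ℝ :=
  (∑ σ : ι → Bool, F σ * exp (energy K e c σ)) / partitionFn K e c

variable {K : Finset κ} (e : κ → ι → ℕ)

lemma partitionFn_pos (c : κ → ℝ) : 0 < partitionFn K e c :=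
  sum_pos (fun _ _ => exp_pos _) univ_nonempty

lemma gibbsAvg_mul_partitionFn (c : κ → ℝ) (F : (ι → Bool) → ℝ) :
    gibbsAvg K e c F * partitionFn K e c = ∑ σ : ι → Bool, F σ * exp (energy K e c σ) :=
  div_mul_cancel₀ _ (partitionFn_pos e c).ne'

lemma gibbsAvg_energy (c v : κ → ℝ) :
    gibbsAvg K e c (energy K e v) = ∑ k ∈ K, v k * gibbsAvg K e c (spinProd (e k)) := by
  simp only [gibbsAvg, mul_div_assoc', ← sum_div, energy, sum_mul, mul_sum]
  rw [sum_comm]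
  exact congrArg (· / _) (sum_congr rfl fun k _ => sum_congr rfl fun σ _ => by ring)

lemma hasDerivAt_log_partitionFn (a v : κ → ℝ) (t : ℝ) :
    HasDerivAt (fun t => log (partitionFn K e fun k => a k + t * v k))
      (gibbsAvg K e (fun k => a k + t * v k) (energy K e v)) t := by
  have hZ : HasDerivAt (fun t => partitionFn K e fun k => a k + t * v k)
      (∑ σ, energy K e v σ * exp (energy K e (fun k => a k + t * v k) σ)) t := by
    simp only [partitionFn, energy_line]
    refine HasDerivAt.fun_sum fun σ _ => ?_
    simpa [mul_comm] using ((hasDerivAt_mul_const (energy K e v σ)).const_add (energy K e a σ)).exp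
  exact hZ.log (partitionFn_pos e _).ne'

variable [DecidableEq κ] {c w : κ → ℝ}

theorem griffiths_inequality (hc : ∀ k ∈ K, 0 ≤ c k) (f : ι → ℕ) :
    0 ≤ ∑ σ : ι → Bool, spinProd f σ * exp (energy K e c σ) := by
  have hexp : ∀ σ k, exp (c k * spinProd (e k) σ) = cosh (c k) + sinh (c k) * spinProd (e k) σ := by
    intro σ k
    rcases spinProd_eq_one_or (e k) σ with h | h
    · rw [h, mul_one, mul_one, cosh_add_sinh]
    · rw [h, mul_neg_one, mul_neg_one, ← sub_eq_add_neg, cosh_sub_sinh]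
  have hexpand : ∀ σ, spinProd f σ * exp (energy K e c σ) = ∑ t ∈ K.powerset,
      ((∏ k ∈ t, cosh (c k)) * ∏ k ∈ K \ t, sinh (c k)) * spinProd (f + ∑ k ∈ K \ t, e k) σ := by
    intro σ
    rw [energy, exp_sum, prod_congr rfl fun k _ => hexp σ k, prod_add, mul_sum]
    refine sum_congr rfl fun t _ => ?_
    rw [spinProd_add, spinProd_sum, prod_mul_distrib]
    ring
  rw [sum_congr rfl fun σ _ => hexpand σ, sum_comm]
  refine sum_nonneg fun t _ => ?_
  rw [← mul_sum]
  refine mul_nonneg (mul_nonneg ?_ ?_) (sum_spinProd_nonneg _)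
  · exact prod_nonneg fun k _ => (cosh_pos _).le
  · exact prod_nonneg fun k hk => sinh_nonneg_iff.mpr (hc k (mem_sdiff.mp hk).1)

theorem sum_duplicate_nonneg (hw : ∀ k ∈ K, 0 ≤ w k) (s : κ → Bool) (f : ι → ℕ) (b : Bool) :
    0 ≤ ∑ σ : ι → Bool, ∑ τ : ι → Bool, (spinProd f σ + spin b * spinProd f τ) *
      exp (energy K e w σ + energy K e (fun k => spin (s k) * w k) τ) := by
  have hsubst : ∀ σ : ι → Bool,
      ∑ τ : ι → Bool, (spinProd f σ + spin b * spinProd f τ) *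
        exp (energy K e w σ + energy K e (fun k => spin (s k) * w k) τ) =
      ∑ ρ : ι → Bool, (1 + spin b * spinProd f ρ) * (spinProd f σ *
        exp (energy K e (fun k => w k * (1 + spin (s k) * spinProd (e k) ρ)) σ)) := by
    intro σ
    rw [← (involutive_beq σ).bijective.sum_comp]
    refine sum_congr rfl fun ρ _ => ?_
    have hE : ∀ k, w k * spinProd (e k) σ + spin (s k) * w k * (spinProd (e k) σ * spinProd (e k) ρ)
        = w k * (1 + spin (s k) * spinProd (e k) ρ) * spinProd (e k) σ := fun k => by ring
    simp only [energy, spinProd_beq, ← sum_add_distrib, hE]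
    ring
  rw [sum_congr rfl fun σ _ => hsubst σ, sum_comm]
  refine sum_nonneg fun ρ _ => ?_
  rw [← mul_sum]
  exact mul_nonneg (one_add_spin_mul_spinProd_nonneg b f ρ) (griffiths_inequality e
    (fun k hk => mul_nonneg (hw k hk) (one_add_spin_mul_spinProd_nonneg _ _ _)) f)

theorem ginibre_inequality (hw : ∀ k ∈ K, 0 ≤ w k) (s : κ → Bool) (f : ι → ℕ) :
    |gibbsAvg K e (fun k => spin (s k) * w k) (spinProd f)| ≤ gibbsAvg K e w (spinProd f) := by
  set Z := partitionFn K e w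
  set Z' := partitionFn K e fun k => spin (s k) * w k
  have hZ : 0 < Z * Z' := mul_pos (partitionFn_pos e w) (partitionFn_pos e _)
  have hdup : ∀ b, gibbsAvg K e w (spinProd f) +
      spin b * gibbsAvg K e (fun k => spin (s k) * w k) (spinProd f) =
      (∑ σ : ι → Bool, ∑ τ : ι → Bool, (spinProd f σ + spin b * spinProd f τ) *
        exp (energy K e w σ + energy K e (fun k => spin (s k) * w k) τ)) / (Z * Z') := by
    intro b
    rw [eq_div_iff hZ.ne']
    calc _ = gibbsAvg K e w (spinProd f) * Z * Z' + spin b * (Z *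
          (gibbsAvg K e (fun k => spin (s k) * w k) (spinProd f) * Z')) := by ring
      _ = _ := by
        simp only [Z, Z']
        rw [gibbsAvg_mul_partitionFn, gibbsAvg_mul_partitionFn]
        rw [partitionFn, partitionFn, Fintype.sum_mul_sum, Fintype.sum_mul_sum]
        simp only [mul_sum, ← sum_add_distrib, exp_add]
        exact sum_congr rfl fun σ _ => sum_congr rfl fun τ _ => by ring
  have hnonneg : ∀ b, 0 ≤ gibbsAvg K e w (spinProd f) +
      spin b * gibbsAvg K e (fun k => spin (s k) * w k) (spinProd f) := fun b => by
    rw [hdup]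
    exact div_nonneg (sum_duplicate_nonneg e hw s f b) hZ.le
  have h₁ := hnonneg true
  have h₂ := hnonneg false
  simp only [spin_true, spin_false] at h₁ h₂
  rw [abs_le]
  constructor <;> linarith

lemma gibbsAvg_flip_energy_le (hw : ∀ k ∈ K, 0 ≤ w k) {v : κ → ℝ} (hv : ∀ k ∈ K, 0 ≤ v k)
    (s : κ → Bool) :
    gibbsAvg K e (fun k => spin (s k) * w k) (energy K e fun k => spin (s k) * v k) ≤
      gibbsAvg K e w (energy K e v) := by
  rw [gibbsAvg_energy, gibbsAvg_energy]
  refine sum_le_sum fun k hk => ?_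
  rw [mul_comm (spin _), mul_assoc]
  refine mul_le_mul_of_nonneg_left ?_ (hv k hk)
  calc _ ≤ |spin (s k) * gibbsAvg K e (fun k => spin (s k) * w k) (spinProd (e k))| :=
        le_abs_self _
    _ ≤ _ := by rw [abs_mul, abs_spin, one_mul]; exact ginibre_inequality e hw s (e k)

theorem log_partitionFn_sub_log_partitionFn_flip_mono (s : κ → Bool) {c' : κ → ℝ}
    (hc : ∀ k ∈ K, 0 ≤ c k) (hcc' : ∀ k ∈ K, c k ≤ c' k) :
    log (partitionFn K e c) - log (partitionFn K e fun k => spin (s k) * c k) ≤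
      log (partitionFn K e c') - log (partitionFn K e fun k => spin (s k) * c' k) := by
  set v := fun k => c' k - c k
  have hv : ∀ k ∈ K, 0 ≤ v k := fun k hk => sub_nonneg.mpr (hcc' k hk)
  set g := fun t : ℝ => log (partitionFn K e fun k => c k + t * v k) -
    log (partitionFn K e fun k => spin (s k) * c k + t * (spin (s k) * v k))
  have hg : ∀ t, HasDerivAt g (gibbsAvg K e (fun k => c k + t * v k) (energy K e v) -
      gibbsAvg K e (fun k => spin (s k) * c k + t * (spin (s k) * v k))
        (energy K e fun k => spin (s k) * v k)) t :=
    fun t => (hasDerivAt_log_partitionFn e _ _ t).sub (hasDerivAt_log_partitionFn e _ _ t)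
  have hmono : MonotoneOn g (Set.Icc 0 1) := by
    refine monotoneOn_of_hasDerivWithinAt_nonneg (convex_Icc 0 1)
      (HasDerivAt.continuousOn fun t _ => hg t) (fun t _ => (hg t).hasDerivWithinAt)
      fun t ht => ?_
    rw [interior_Icc] at ht
    have hflip : (fun k => spin (s k) * c k + t * (spin (s k) * v k)) =
        fun k => spin (s k) * (c k + t * v k) := funext fun k => by ring
    rw [hflip, sub_nonneg]
    exact gibbsAvg_flip_energy_le e
      (fun k hk => add_nonneg (hc k hk) (mul_nonneg ht.1.le (hv k hk))) hv s
  have h01 := hmono (Set.left_mem_Icc.mpr zero_le_one) (Set.right_mem_Icc.mpr zero_le_one)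
    zero_le_one
  simpa [g, v, ← mul_add] using h01

end SpinSystem

section SemiInfiniteIsing

variable {d : ℕ}

/-- `.inl ⟨i, j⟩` is the bond `{i, j}` seen from `i ∈ Λ`; its other end `j` may lie outside `Λ`,
where the `+` boundary spin is `1`, so `termExponent` only records sites of `Λ`.
`.inr i` is the field term at `i`. -/
abbrev Term (d : ℕ) : Type := (Σ _ : Site d, Site d) ⊕ Site d

noncomputable def terms (Λ : Finset (Site d)) : Finset (Term d) :=
  (Λ.sigma fun i => (nbrs i).filter fun j => 1 ≤ j.2).disjSum Λ

def termExponent (Λ : Finset (Site d)) : Term d → Λ → ℕ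
  | .inl p => fun a => (if (a : Site d) = p.1 then 1 else 0) + (if (a : Site d) = p.2 then 1 else 0)
  | .inr i => fun a => if (a : Site d) = i then 1 else 0

noncomputable def termCoupling (Λ : Finset (Site d)) (J : ℝ) (h : Site d → ℝ) : Term d → ℝ
  | .inl p => J * if p.2 ∈ Λ then 1 / 2 else 1
  | .inr i => h i

lemma spinProd_indicator {Λ : Finset (Site d)} (τ : Λ → Bool) (j : Site d) :
    spinProd (fun a : Λ => if (a : Site d) = j then 1 else 0) τ = conf Λ (plusBC d) τ j := by
  by_cases hj : j ∈ Λ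
  · have hpow : ∀ a : Λ, spin (τ a) ^ (if (a : Site d) = j then 1 else 0) =
        if a = ⟨j, hj⟩ then spin (τ a) else 1 := fun a => by
      by_cases ha : a = ⟨j, hj⟩
      · rw [if_pos ha, if_pos (congrArg Subtype.val ha), pow_one]
      · rw [if_neg ha, if_neg fun h => ha (Subtype.ext h), pow_zero]
    rw [spinProd, prod_congr rfl fun a _ => hpow a, prod_ite_eq']
    simp [conf, hj, spin]
  · have hpow : ∀ a : Λ, spin (τ a) ^ (if (a : Site d) = j then 1 else 0) = 1 := fun a => by
      rw [if_neg fun h : (a : Site d) = j => hj (h ▸ a.2), pow_zero]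
    rw [spinProd, prod_congr rfl fun a _ => hpow a, prod_const_one]
    simp [conf, hj, plusBC]

lemma energyH_conf_plusBC (J : ℝ) (h : Site d → ℝ) (Λ : Finset (Site d)) (τ : Λ → Bool) :
    energyH J h Λ (conf Λ (plusBC d) τ) =
      energy (terms Λ) (termExponent Λ) (termCoupling Λ J h) τ := by
  rw [energy, terms, sum_disjSum, sum_sigma, energyH, mul_sum]
  congr 1
  · refine sum_congr rfl fun i _ => ?_
    rw [mul_sum]
    refine sum_congr rfl fun j _ => ?_
    have hpair : spinProd (termExponent Λ (.inl ⟨i, j⟩)) τ =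
        conf Λ (plusBC d) τ i * conf Λ (plusBC d) τ j := by
      rw [termExponent, ← spinProd_indicator, ← spinProd_indicator, ← spinProd_add]
      rfl
    rw [hpair, termCoupling]
    ring
  · refine sum_congr rfl fun i _ => ?_
    rw [termCoupling, termExponent, spinProd_indicator]

lemma ZH_plusBC (J : ℝ) (h : Site d → ℝ) (Λ : Finset (Site d)) :
    ZH J h Λ (plusBC d) = partitionFn (terms Λ) (termExponent Λ) (termCoupling Λ J h) :=
  sum_congr rfl fun τ _ => by rw [energyH_conf_plusBC]

lemma conf_minusBC (Λ : Finset (Site d)) (τ : Λ → Bool) :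
    conf Λ (minusBC d) τ = fun i => -conf Λ (plusBC d) (fun a => !τ a) i := by
  funext i
  by_cases hi : i ∈ Λ
  · cases hτ : τ ⟨i, hi⟩ <;> simp [conf, hi, hτ]
  · simp [conf, hi, minusBC, plusBC]

lemma energyH_neg (J : ℝ) (h : Site d → ℝ) (Λ : Finset (Site d)) (σ : Site d → ℝ) :
    energyH J h Λ (fun i => -σ i) = energyH J (fun i => -h i) Λ σ := by
  simp only [energyH, mul_neg, neg_mul, neg_neg]

lemma ZH_minusBC (J : ℝ) (h : Site d → ℝ) (Λ : Finset (Site d)) :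
    ZH J h Λ (minusBC d) = ZH J (fun i => -h i) Λ (plusBC d) := by
  have hflip : Function.Involutive fun τ : Λ → Bool => fun a => !τ a :=
    fun τ => funext fun a => Bool.not_not (τ a)
  rw [ZH, ← hflip.bijective.sum_comp]
  exact sum_congr rfl fun τ _ => by simp only [conf_minusBC, energyH_neg, Bool.not_not]

lemma termCoupling_neg (Λ : Finset (Site d)) (J : ℝ) (h : Site d → ℝ) :
    termCoupling Λ J (fun i => -h i) = fun k => spin k.isLeft * termCoupling Λ J h k := by
  funext k
  cases k <;> simp [termCoupling]

theorem log_ZH_plusBC_sub_log_ZH_minusBC_mono (Λ : Finset (Site d)) {J J' : ℝ} {h h' : Site d → ℝ}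
    (hJ : 0 ≤ J) (hJJ' : J ≤ J') (hh : ∀ i ∈ Λ, 0 ≤ h i) (hhh' : ∀ i ∈ Λ, h i ≤ h' i) :
    log (ZH J h Λ (plusBC d)) - log (ZH J h Λ (minusBC d)) ≤
      log (ZH J' h' Λ (plusBC d)) - log (ZH J' h' Λ (minusBC d)) := by
  simp only [ZH_minusBC, ZH_plusBC, termCoupling_neg]
  refine log_partitionFn_sub_log_partitionFn_flip_mono _ _ (fun k hk => ?_) fun k hk => ?_
  · rcases k with p | i
    · exact mul_nonneg hJ (by split_ifs <;> norm_num)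
    · exact hh i (inr_mem_disjSum.mp hk)
  · rcases k with p | i
    · exact mul_le_mul_of_nonneg_right hJJ' (by split_ifs <;> norm_num)
    · exact hhh' i (inr_mem_disjSum.mp hk)

lemma ZH_pos (J : ℝ) (h : Site d → ℝ) (Λ : Finset (Site d)) (b : Site d → ℝ) :
    0 < ZH J h Λ b :=
  sum_pos (fun _ _ => exp_pos _) univ_nonempty

lemma wallSeq_eq (n : ℕ) (J : ℝ) (h : Site d → ℝ) :
    wallSeq d J h n = ((wall d n).card : ℝ)⁻¹ *
      (log (ZH J h (box d n) (plusBC d)) - log (ZH J h (box d n) (minusBC d))) := by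
  rw [wallSeq, log_div (ZH_pos ..).ne' (ZH_pos ..).ne']
  ring

theorem wallSeq_mono {n : ℕ} {J J' : ℝ} {h h' : Site d → ℝ} (hJ : 0 ≤ J) (hJJ' : J ≤ J')
    (hh : ∀ i ∈ box d n, 0 ≤ h i) (hhh' : ∀ i ∈ box d n, h i ≤ h' i) :
    wallSeq d J h n ≤ wallSeq d J' h' n := by
  rw [wallSeq_eq, wallSeq_eq]
  exact mul_le_mul_of_nonneg_left (log_ZH_plusBC_sub_log_ZH_minusBC_mono _ hJ hJJ' hh hhh')
    (inv_nonneg.mpr (Nat.cast_nonneg _))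

lemma one_le_toNat_of_mem_box {n : ℕ} {i : Site d} (hi : i ∈ box d n) : 1 ≤ i.2.toNat := by
  have := (mem_Icc.mp (mem_product.mp hi).2).1
  omega

end SemiInfiniteIsing

end WallFreeEnergy

theorem wall_free_energy_monotone_general (d : ℕ) :
    (∀ (J J' : ℝ) (hseq : ℕ → ℝ), 0 ≤ J → J ≤ J' →
      Summable hseq → (∀ ℓ : ℕ, 1 ≤ ℓ → 0 < hseq ℓ) →
      ∀ τ τ' : ℝ,
        Filter.Tendsto (wallSeq d J (fun i => hseq i.2.toNat)) Filter.atTop (nhds τ) →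
        Filter.Tendsto (wallSeq d J' (fun i => hseq i.2.toNat)) Filter.atTop (nhds τ') →
        τ ≤ τ') ∧
    (∀ (J : ℝ) (hseq hseq' : ℕ → ℝ), 0 ≤ J →
      Summable hseq → Summable hseq' →
      (∀ ℓ : ℕ, 1 ≤ ℓ → 0 < hseq ℓ) → (∀ ℓ : ℕ, 1 ≤ ℓ → 0 < hseq' ℓ) →
      (∀ ℓ : ℕ, 1 ≤ ℓ → hseq ℓ ≤ hseq' ℓ) →
      ∀ τ τ' : ℝ,
        Filter.Tendsto (wallSeq d J (fun i => hseq i.2.toNat)) Filter.atTop (nhds τ) →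
        Filter.Tendsto (wallSeq d J (fun i => hseq' i.2.toNat)) Filter.atTop (nhds τ') →
        τ ≤ τ') := by
  constructor
  · intro J J' hseq hJ hJJ' _ hpos τ τ' hτ hτ'
    exact le_of_tendsto_of_tendsto' hτ hτ' fun n => WallFreeEnergy.wallSeq_mono hJ hJJ'
      (fun i hi => (hpos _ (WallFreeEnergy.one_le_toNat_of_mem_box hi)).le) fun _ _ => le_rfl
  · intro J hseq hseq' hJ _ _ hpos _ hle τ τ' hτ hτ'
    exact le_of_tendsto_of_tendsto' hτ hτ' fun n => WallFreeEnergy.wallSeq_mono hJ le_rfl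
      (fun i hi => (hpos _ (WallFreeEnergy.one_le_toNat_of_mem_box hi)).le)
      fun i hi => hle _ (WallFreeEnergy.one_le_toNat_of_mem_box hi)

/-- Monotonicity of the wall free energy: it is non-decreasing
in the coupling `J` and in the (summable, positive) inducing sequence `(h_ℓ)_{ℓ≥1}`.
The wall free energies are described as the limits of the finite-volume sequences
`wallSeq`. -/
theorem wall_free_energy_monotone (d : ℕ) (hd : 2 ≤ d) :
    (∀ (J J' : ℝ) (hseq : ℕ → ℝ), 0 ≤ J → J ≤ J' →
      Summable hseq → (∀ ℓ : ℕ, 1 ≤ ℓ → 0 < hseq ℓ) →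
      ∀ τ τ' : ℝ,
        Filter.Tendsto (wallSeq d J (fun i => hseq i.2.toNat)) Filter.atTop (nhds τ) →
        Filter.Tendsto (wallSeq d J' (fun i => hseq i.2.toNat)) Filter.atTop (nhds τ') →
        τ ≤ τ') ∧
    (∀ (J : ℝ) (hseq hseq' : ℕ → ℝ), 0 ≤ J →
      Summable hseq → Summable hseq' →
      (∀ ℓ : ℕ, 1 ≤ ℓ → 0 < hseq ℓ) → (∀ ℓ : ℕ, 1 ≤ ℓ → 0 < hseq' ℓ) →
      (∀ ℓ : ℕ, 1 ≤ ℓ → hseq ℓ ≤ hseq' ℓ) →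
      ∀ τ τ' : ℝ,
        Filter.Tendsto (wallSeq d J (fun i => hseq i.2.toNat)) Filter.atTop (nhds τ) →
        Filter.Tendsto (wallSeq d J (fun i => hseq' i.2.toNat)) Filter.atTop (nhds τ') →
        τ ≤ τ') :=
  wall_free_energy_monotone_general d
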